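/- arXiv:1906.04577 — 4 statements merged into one kernel-verified Lean document; each statement's English description precedes it below -/
import Mathlib

section
/- For every d > 0, the derivative of r at d is negative if and only if d²·(k0 + k1) − 2·(ln τ)·(k0 − k1) > 0; it is positive if and only if d²·(k0 + k1) − 2·(ln τ)·(k0 − k1) < 0; and it is zero if and only if d²·(k0 + k1) − 2·(ln τ)·(k0 − k1) = 0. -/
/-- The Gaussian Q-function `Q(x) = (1/√(2π)) ∫_x^∞ exp(−t²/2) dt`. -/
noncomputable def gaussQ (x : ℝ) : ℝ :=
  (Real.sqrt (2 * Real.pi))⁻¹ * ∫ t in Set.Ioi x, Real.exp (-(t ^ 2 / 2))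

/-! Since `Q' = -φ` with `φ` the Gaussian density, `r'(d)` is a combination of `φ` at the two
arguments `ζ (± ln τ / d + d / 2)`. Completing the square, `φ` there equals the common factor
`φ₀ = (2π)^{-1/2} exp(-((ln τ)²/d² + d²/4)/2)` times `τ^{∓1/2}`, so that
`r'(d) = -φ₀ / (2d²) · (d²(k0 + k1) - 2 ln τ (k0 - k1))`, and `φ₀ > 0` gives the sign. -/

open Real Set MeasureTheory

theorem hasDerivAt_integral_Ioi {E : Type*} [NormedAddCommGroup E] [NormedSpace ℝ E]
    [CompleteSpace E] {f : ℝ → E} {x : ℝ} (hf : Integrable f) (hfx : ContinuousAt f x) :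
    HasDerivAt (fun a => ∫ t in Ioi a, f t) (-f x) x := by
  have hsplit : (fun a => ∫ t in Ioi a, f t) =
      fun a => (∫ t in Ioi 0, f t) - ∫ t in (0 : ℝ)..a, f t := by
    funext a
    rw [← intervalIntegral.integral_Ioi_sub_Ioi' hf.integrableOn hf.integrableOn, sub_sub_cancel]
  rw [hsplit]
  exact (intervalIntegral.integral_hasDerivAt_right hf.intervalIntegrable
    hf.aestronglyMeasurable.stronglyMeasurableAtFilter hfx).const_sub _

theorem integrable_exp_neg_sq_div_two : Integrable fun t : ℝ => exp (-(t ^ 2 / 2)) := by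
  simpa [div_eq_inv_mul] using integrable_exp_neg_mul_sq (show (0 : ℝ) < 1 / 2 by norm_num)

theorem hasDerivAt_gaussQ (x : ℝ) :
    HasDerivAt gaussQ (-((√(2 * π))⁻¹ * exp (-(x ^ 2 / 2)))) x := by
  rw [← mul_neg]
  exact (hasDerivAt_integral_Ioi integrable_exp_neg_sq_div_two
    (by fun_prop : Continuous fun t : ℝ => exp (-(t ^ 2 / 2))).continuousAt).const_mul _

theorem exp_neg_sq_div_two_mul_div_add_half {ζ a d : ℝ} (hζ : ζ ^ 2 = 1) (hd : d ≠ 0) :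
    exp (-((ζ * (a / d + d / 2)) ^ 2 / 2)) =
      exp (-((a ^ 2 / d ^ 2 + d ^ 2 / 4) / 2)) * exp (-a / 2) := by
  rw [← exp_add, mul_pow, hζ, one_mul]
  congr 1
  field_simp
  ring

theorem hasDerivAt_gaussQ_mul_div_add_half {ζ a d : ℝ} (hζ : ζ ^ 2 = 1) (hd : d ≠ 0) :
    HasDerivAt (fun s => gaussQ (ζ * (a / s + s / 2)))
      (-((√(2 * π))⁻¹ * exp (-((a ^ 2 / d ^ 2 + d ^ 2 / 4) / 2)) * exp (-a / 2)) *
        (ζ * (1 / 2 - a / d ^ 2))) d := by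
  have hinner : HasDerivAt (fun s => ζ * (a / s + s / 2)) (ζ * (1 / 2 - a / d ^ 2)) d := by
    have := ((hasDerivAt_inv hd).const_mul a |>.add ((hasDerivAt_id d).div_const 2)).const_mul ζ
    simp only [← div_eq_mul_inv, id] at this
    exact this.congr_deriv (by ring)
  exact ((hasDerivAt_gaussQ _).comp d hinner).congr_deriv
    (by rw [exp_neg_sq_div_two_mul_div_add_half hζ hd]; ring)

theorem stmt_5_general (π0 π1 C00 C01 C10 C11 τ ζ : ℝ)
    (hτ : 0 < τ) (hζ : ζ = 1 ∨ ζ = -1)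
    (k0 k1 : ℝ)
    (hk0 : k0 = π0 * ζ * (C10 - C00) * τ ^ (-(1 / 2) : ℝ))
    (hk1 : k1 = π1 * ζ * (C01 - C11) * τ ^ ((1 / 2) : ℝ))
    (r : ℝ → ℝ)
    (hr : r = fun d : ℝ => π0 * C00 + π1 * C11
        + π0 * (C10 - C00) * gaussQ (ζ * (Real.log τ / d + d / 2))
        + π1 * (C01 - C11) * gaussQ (ζ * (-Real.log τ / d + d / 2)))
    (d : ℝ) (hd : 0 < d) :
    (deriv r d < 0 ↔ d ^ 2 * (k0 + k1) - 2 * Real.log τ * (k0 - k1) > 0) ∧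
    (deriv r d > 0 ↔ d ^ 2 * (k0 + k1) - 2 * Real.log τ * (k0 - k1) < 0) ∧
    (deriv r d = 0 ↔ d ^ 2 * (k0 + k1) - 2 * Real.log τ * (k0 - k1) = 0) := by
  have hζ2 : ζ ^ 2 = 1 := by rcases hζ with rfl | rfl <;> norm_num
  set E := d ^ 2 * (k0 + k1) - 2 * Real.log τ * (k0 - k1)
  set φ₀ := (√(2 * π))⁻¹ * exp (-((Real.log τ ^ 2 / d ^ 2 + d ^ 2 / 4) / 2))
  have hc : 0 < φ₀ / (2 * d ^ 2) := by positivity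
  have hderiv : deriv r d = -(φ₀ / (2 * d ^ 2) * E) := by
    have h0 := hasDerivAt_gaussQ_mul_div_add_half (a := Real.log τ) hζ2 hd.ne'
    have h1 := hasDerivAt_gaussQ_mul_div_add_half (a := -Real.log τ) hζ2 hd.ne'
    refine HasDerivAt.deriv ?_
    rw [hr]
    refine (((h0.const_mul _).const_add _).add (h1.const_mul _)).congr_deriv ?_
    have hτneg : exp (-log τ / 2) = τ ^ (-(1 / 2) : ℝ) := by rw [rpow_def_of_pos hτ]; ring_nf
    have hτpos : exp (log τ / 2) = τ ^ ((1 / 2) : ℝ) := by rw [rpow_def_of_pos hτ]; ring_nf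
    rw [neg_sq, neg_neg, hτneg, hτpos]
    simp only [E, φ₀, hk0, hk1]
    field_simp
    ring
  simp only [hderiv, gt_iff_lt, neg_lt_zero, neg_pos, neg_eq_zero, mul_eq_zero, hc.ne', false_or]
  exact ⟨mul_pos_iff_of_pos_left hc, smul_neg_iff_of_pos_left hc, trivial⟩

/-- Sign of the derivative of the transmitter Bayes risk `r` at `d > 0` is
determined by the sign of `d²·(k0 + k1) − 2·(ln τ)·(k0 − k1)`. -/
theorem stmt_5 (π0 π1 C00 C01 C10 C11 τ ζ : ℝ)
    (hπ0 : 0 < π0) (hπ1 : 0 < π1) (hτ : 0 < τ) (hζ : ζ = 1 ∨ ζ = -1)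
    (k0 k1 : ℝ)
    (hk0 : k0 = π0 * ζ * (C10 - C00) * τ ^ (-(1 / 2) : ℝ))
    (hk1 : k1 = π1 * ζ * (C01 - C11) * τ ^ ((1 / 2) : ℝ))
    (r : ℝ → ℝ)
    (hr : r = fun d : ℝ => π0 * C00 + π1 * C11
        + π0 * (C10 - C00) * gaussQ (ζ * (Real.log τ / d + d / 2))
        + π1 * (C01 - C11) * gaussQ (ζ * (-Real.log τ / d + d / 2)))
    (d : ℝ) (hd : 0 < d) :
    (deriv r d < 0 ↔ d ^ 2 * (k0 + k1) - 2 * Real.log τ * (k0 - k1) > 0) ∧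
    (deriv r d > 0 ↔ d ^ 2 * (k0 + k1) - 2 * Real.log τ * (k0 - k1) < 0) ∧
    (deriv r d = 0 ↔ d ^ 2 * (k0 + k1) - 2 * Real.log τ * (k0 - k1) = 0) :=
  stmt_5_general π0 π1 C00 C01 C10 C11 τ ζ hτ hζ k0 k1 hk0 hk1 r hr d hd
end

section
/- (Stackelberg, monotone decreasing case.) If (ln τ)·(k0 − k1) < 0 and k0 + k1 ≥ 0, then r is strictly decreasing on (0, ∞); in particular, for every d_max > 0 and every d ∈ (0, d_max), r(d_max) < r(d). -/
noncomputable def bayesRisk (π0 π1 C00 C01 C10 C11 τ ζ d : ℝ) : ℝ :=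
  π0 * C00 + π1 * C11
    + π0 * (C10 - C00) * gaussQ (ζ * (Real.log τ / d + d / 2))
    + π1 * (C01 - C11) * gaussQ (ζ * (-Real.log τ / d + d / 2))

section

open Real Set MeasureTheory

theorem hasDerivAt_gaussQ_comp {ζ : ℝ} (hζ : ζ ^ 2 = 1) (b : ℝ) {d : ℝ} (hd : d ≠ 0) :
    HasDerivAt (fun d => gaussQ (ζ * (b / d + d / 2)))
      (-((√(2 * π))⁻¹ * exp (-((b ^ 2 / d ^ 2 + d ^ 2 / 4) / 2))) * (ζ * exp (-b / 2))
        * (1 / 2 - b / d ^ 2)) d := by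
  have hinner : HasDerivAt (fun d => ζ * (b / d + d / 2)) (ζ * (1 / 2 - b / d ^ 2)) d :=
    ((((hasDerivAt_inv hd).const_mul b).add ((hasDerivAt_id d).div_const 2)).const_mul
      ζ).congr_deriv (by ring)
  have hgauss : exp (-((ζ * (b / d + d / 2)) ^ 2 / 2))
      = exp (-((b ^ 2 / d ^ 2 + d ^ 2 / 4) / 2)) * exp (-b / 2) := by
    rw [← exp_add, mul_pow, hζ, one_mul]
    congr 1
    field_simp
    ring
  refine ((hasDerivAt_gaussQ _).comp d hinner).congr_deriv ?_
  rw [hgauss]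
  ring

theorem hasDerivAt_bayesRisk {π0 π1 C00 C01 C10 C11 τ ζ k0 k1 d : ℝ} (hτ : 0 < τ)
    (hζ : ζ ^ 2 = 1) (hk0 : k0 = π0 * ζ * (C10 - C00) * τ ^ (-(1 / 2) : ℝ))
    (hk1 : k1 = π1 * ζ * (C01 - C11) * τ ^ ((1 / 2) : ℝ)) (hd : d ≠ 0) :
    HasDerivAt (bayesRisk π0 π1 C00 C01 C10 C11 τ ζ)
      (-((√(2 * π))⁻¹ * exp (-((log τ ^ 2 / d ^ 2 + d ^ 2 / 4) / 2)))
        * ((k0 + k1) / 2 + log τ * (k1 - k0) / d ^ 2)) d := by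
  have hQ0 := (hasDerivAt_gaussQ_comp hζ (log τ) hd).const_mul (π0 * (C10 - C00))
  have hQ1 := (hasDerivAt_gaussQ_comp hζ (-log τ) hd).const_mul (π1 * (C01 - C11))
  refine (((hasDerivAt_const d (π0 * C00 + π1 * C11)).add hQ0).add hQ1).congr_deriv ?_
  rw [hk0, hk1, rpow_def_of_pos hτ, rpow_def_of_pos hτ, neg_sq, neg_neg]
  ring_nf

end

theorem stmt_7_general (π0 π1 C00 C01 C10 C11 τ ζ : ℝ)
    (hτ : 0 < τ) (hζ : ζ = 1 ∨ ζ = -1)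
    (k0 k1 : ℝ)
    (hk0 : k0 = π0 * ζ * (C10 - C00) * τ ^ (-(1 / 2) : ℝ))
    (hk1 : k1 = π1 * ζ * (C01 - C11) * τ ^ ((1 / 2) : ℝ))
    (r : ℝ → ℝ)
    (hr : r = fun d : ℝ => π0 * C00 + π1 * C11
        + π0 * (C10 - C00) * gaussQ (ζ * (Real.log τ / d + d / 2))
        + π1 * (C01 - C11) * gaussQ (ζ * (-Real.log τ / d + d / 2)))
    (hcase1 : Real.log τ * (k0 - k1) < 0) (hcase2 : 0 ≤ k0 + k1) :
    StrictAntiOn r (Set.Ioi (0 : ℝ)) ∧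
    ∀ dmax : ℝ, 0 < dmax → ∀ d ∈ Set.Ioo (0 : ℝ) dmax, r dmax < r d := by
  change r = bayesRisk π0 π1 C00 C01 C10 C11 τ ζ at hr
  subst hr
  have hζ2 : ζ ^ 2 = 1 := by rcases hζ with rfl | rfl <;> norm_num
  have hderiv (d : ℝ) (hd : d ∈ interior (Set.Ioi 0)) :=
    hasDerivAt_bayesRisk hτ hζ2 hk0 hk1 (interior_Ioi.subset hd).ne'
  have hanti : StrictAntiOn (bayesRisk π0 π1 C00 C01 C10 C11 τ ζ) (Set.Ioi 0) := by
    refine strictAntiOn_of_hasDerivWithinAt_neg (convex_Ioi 0)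
      (fun d hd => (hderiv d (interior_Ioi.symm.subset hd)).continuousAt.continuousWithinAt)
      (fun d hd => (hderiv d hd).hasDerivWithinAt) fun d hd => ?_
    have hd : 0 < d := interior_Ioi.subset hd
    have hslope : 0 < Real.log τ * (k1 - k0) / d ^ 2 := by
      apply div_pos _ (by positivity)
      linarith [show Real.log τ * (k1 - k0) = -(Real.log τ * (k0 - k1)) by ring]
    exact mul_neg_of_neg_of_pos (neg_neg_of_pos (by positivity)) (by linarith)
  exact ⟨hanti, fun _ _ d hd => hanti hd.1 (hd.1.trans hd.2) hd.2⟩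

/-- Stackelberg, monotone decreasing case: if `(ln τ)·(k0 − k1) < 0` and
`k0 + k1 ≥ 0`, the transmitter Bayes risk is strictly decreasing on `(0, ∞)`. -/
theorem stmt_7 (π0 π1 C00 C01 C10 C11 τ ζ : ℝ)
    (hπ0 : 0 < π0) (hπ1 : 0 < π1) (hτ : 0 < τ) (hζ : ζ = 1 ∨ ζ = -1)
    (k0 k1 : ℝ)
    (hk0 : k0 = π0 * ζ * (C10 - C00) * τ ^ (-(1 / 2) : ℝ))
    (hk1 : k1 = π1 * ζ * (C01 - C11) * τ ^ ((1 / 2) : ℝ))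
    (r : ℝ → ℝ)
    (hr : r = fun d : ℝ => π0 * C00 + π1 * C11
        + π0 * (C10 - C00) * gaussQ (ζ * (Real.log τ / d + d / 2))
        + π1 * (C01 - C11) * gaussQ (ζ * (-Real.log τ / d + d / 2)))
    (hcase1 : Real.log τ * (k0 - k1) < 0) (hcase2 : 0 ≤ k0 + k1) :
    StrictAntiOn r (Set.Ioi (0 : ℝ)) ∧
    ∀ dmax : ℝ, 0 < dmax → ∀ d ∈ Set.Ioo (0 : ℝ) dmax, r dmax < r d :=
  stmt_7_general π0 π1 C00 C01 C10 C11 τ ζ hτ hζ k0 k1 hk0 hk1 r hr hcase1 hcase2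
end

section
/- (Nash best response of the transmitter.) Let σ > 0, a ≠ 0 be real, η ∈ ℝ, P0, P1 > 0, π0, π1 > 0, and suppose C10 ≠ C00 and C01 ≠ C11. Define f(S0, S1) = π0·(C10 − C00)·Q((η − a·S0)/(|a|·σ)) + π1·(C01 − C11)·Q(−(η − a·S1)/(|a|·σ)). Then for all real S0, S1 with S0² ≤ P0 and S1² ≤ P1, one has f(S0*, S1*) ≤ f(S0, S1), where S0* = −sgn(a)·sgn(C10 − C00)·√P0 and S1* = sgn(a)·sgn(C01 − C11)·√P1. -/
/-!
Each summand of the risk is a constant times `Q` of an affine function of one signal level, and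
`Q` is decreasing. So each summand is minimised by pushing `a·S` to the end `±|a|·√P` of its
range on the side dictated by the sign of the cost difference; the two summands involve different
variables, so the two choices can be made independently. The second summand is the first one for
the data `(-η, -a)`.
-/

theorem Real.sign_mul_self (r : ℝ) : Real.sign r * r = |r| := by
  rcases lt_trichotomy r 0 with hr | rfl | hr
  · simp [Real.sign_of_neg hr, abs_of_neg hr]
  · simp
  · simp [Real.sign_of_pos hr, abs_of_pos hr]

theorem gaussQ_antitone : Antitone gaussQ := by
  intro x y hxy
  refine mul_le_mul_of_nonneg_left ?_ (inv_nonneg.mpr (Real.sqrt_nonneg _))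
  have hint : MeasureTheory.IntegrableOn (fun t : ℝ => Real.exp (-(t ^ 2 / 2))) (Set.Ioi x) := by
    simpa [div_eq_inv_mul] using
      (integrable_exp_neg_mul_sq (by norm_num : (0 : ℝ) < 2⁻¹)).integrableOn
  exact MeasureTheory.setIntegral_mono_set hint
    (.of_forall fun t => (Real.exp_pos _).le) (Set.Ioi_subset_Ioi hxy).eventuallyLE

theorem Antitone.mul_le_mul_of_nonneg_mul_sub {g : ℝ → ℝ} (hg : Antitone g) {c x y : ℝ}
    (h : 0 ≤ c * (x - y)) : c * g x ≤ c * g y := by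
  rcases lt_trichotomy c 0 with hc | rfl | hc
  · exact mul_le_mul_of_nonpos_left (hg (by nlinarith)) hc.le
  · simp
  · exact mul_le_mul_of_nonneg_left (hg (by nlinarith)) hc.le

theorem neg_abs_mul_sqrt_le_mul {c s P : ℝ} (hs : s ^ 2 ≤ P) : -(|c| * Real.sqrt P) ≤ c * s := by
  have := mul_le_mul_of_nonneg_left (Real.abs_le_sqrt hs) (abs_nonneg c)
  rw [← abs_mul] at this
  linarith [neg_abs_le (c * s)]

theorem weighted_gaussQ_extreme_le {w d a b η s P : ℝ} (hw : 0 ≤ w) (hb : 0 ≤ b)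
    (hs : s ^ 2 ≤ P) :
    w * d * gaussQ ((η - a * (-Real.sign a * Real.sign d * Real.sqrt P)) / b)
      ≤ w * d * gaussQ ((η - a * s) / b) := by
  refine gaussQ_antitone.mul_le_mul_of_nonneg_mul_sub ?_
  have hext : d * (a * (-Real.sign a * Real.sign d * Real.sqrt P))
      = -(|d * a| * Real.sqrt P) := by
    rw [abs_mul, ← Real.sign_mul_self d, ← Real.sign_mul_self a]
    ring
  have hgap : 0 ≤ d * (a * s) - d * (a * (-Real.sign a * Real.sign d * Real.sqrt P)) := by
    rw [hext, ← mul_assoc]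
    linarith [neg_abs_mul_sqrt_le_mul (c := d * a) hs]
  calc (0 : ℝ)
      ≤ w * (d * (a * s) - d * (a * (-Real.sign a * Real.sign d * Real.sqrt P))) / b :=
        div_nonneg (mul_nonneg hw hgap) hb
    _ = _ := by ring

theorem stmt_14_general (σ a η P0 P1 π0 π1 C00 C01 C10 C11 : ℝ)
    (hσ : 0 < σ)
    (hπ0 : 0 < π0) (hπ1 : 0 < π1)
    (f : ℝ → ℝ → ℝ)
    (hf : f = fun S0 S1 : ℝ =>
      π0 * (C10 - C00) * gaussQ ((η - a * S0) / (|a| * σ))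
        + π1 * (C01 - C11) * gaussQ (-((η - a * S1) / (|a| * σ)))) :
    ∀ S0 S1 : ℝ, S0 ^ 2 ≤ P0 → S1 ^ 2 ≤ P1 →
      f (-Real.sign a * Real.sign (C10 - C00) * Real.sqrt P0)
        (Real.sign a * Real.sign (C01 - C11) * Real.sqrt P1) ≤ f S0 S1 := by
  intro S0 S1 hS0 hS1
  subst hf
  have hb : 0 ≤ |a| * σ := mul_nonneg (abs_nonneg a) hσ.le
  have hflip : ∀ S, -((η - a * S) / (|a| * σ)) = (-η - -a * S) / (|-a| * σ) := fun S => by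
    rw [abs_neg]; ring
  have hS1' : Real.sign a * Real.sign (C01 - C11) * Real.sqrt P1
      = -Real.sign (-a) * Real.sign (C01 - C11) * Real.sqrt P1 := by
    rw [Real.sign_neg, neg_neg]
  refine add_le_add (weighted_gaussQ_extreme_le hπ0.le hb hS0) ?_
  rw [hS1', hflip, hflip]
  exact weighted_gaussQ_extreme_le hπ1.le (abs_neg a ▸ hb) hS1

/-- Nash best response of the transmitter to the single-threshold rule
`a·y ≥ η`: the signal pair
`S0* = −sgn(a)·sgn(C10 − C00)·√P0`, `S1* = sgn(a)·sgn(C01 − C11)·√P1`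
minimizes the transmitter's Bayes risk over the peak-power constraint set. -/
theorem stmt_14 (σ a η P0 P1 π0 π1 C00 C01 C10 C11 : ℝ)
    (hσ : 0 < σ) (ha : a ≠ 0) (hP0 : 0 < P0) (hP1 : 0 < P1)
    (hπ0 : 0 < π0) (hπ1 : 0 < π1)
    (hC0 : C10 ≠ C00) (hC1 : C01 ≠ C11)
    (f : ℝ → ℝ → ℝ)
    (hf : f = fun S0 S1 : ℝ =>
      π0 * (C10 - C00) * gaussQ ((η - a * S0) / (|a| * σ))
        + π1 * (C01 - C11) * gaussQ (-((η - a * S1) / (|a| * σ)))) :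
    ∀ S0 S1 : ℝ, S0 ^ 2 ≤ P0 → S1 ^ 2 ≤ P1 →
      f (-Real.sign a * Real.sign (C10 - C00) * Real.sqrt P0)
        (Real.sign a * Real.sign (C01 - C11) * Real.sqrt P1) ≤ f S0 S1 :=
  stmt_14_general σ a η P0 P1 π0 π1 C00 C01 C10 C11 hσ hπ0 hπ1 f hf
end

section
/- (Optimal vector signal separation.) Let n ≥ 1, let Σ be a real symmetric positive definite n×n matrix with smallest eigenvalue λ_min, and let P0, P1 > 0. Then the greatest value of (S1 − S0)ᵀ Σ⁻¹ (S1 − S0) over all S0, S1 ∈ ℝⁿ with ‖S0‖² ≤ P0 and ‖S1‖² ≤ P1 equals (√P0 + √P1)²/λ_min; it is attained at S0 = −√P0·v and S1 = √P1·v, where v is a unit eigenvector of Σ corresponding to λ_min. -/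
/-!
Since every eigenvalue of `Σ` is at least `λ_min > 0`, the Loewner bound `λ_min • 1 ≤ Σ` gives
`wᵀ Σ⁻¹ w ≤ ‖w‖² / λ_min`, and the triangle inequality gives `‖S1 - S0‖ ≤ √P0 + √P1`.
Both inequalities are equalities for `S0 = -√P0 v`, `S1 = √P1 v`, because `Σ⁻¹ v = λ_min⁻¹ v`.
-/

open Matrix

open scoped MatrixOrder

section

variable {n : Type*} [Fintype n]

theorem dotProduct_self_eq_norm_toLp_sq (x : n → ℝ) : x ⬝ᵥ x = ‖WithLp.toLp 2 x‖ ^ 2 := by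
  rw [← real_inner_self_eq_norm_sq]
  rfl

theorem dotProduct_sub_self_le {x y : n → ℝ} {a b : ℝ} (hx : x ⬝ᵥ x ≤ a) (hy : y ⬝ᵥ y ≤ b) :
    (x - y) ⬝ᵥ (x - y) ≤ (√a + √b) ^ 2 := by
  rw [dotProduct_self_eq_norm_toLp_sq] at hx hy ⊢
  have hx' : ‖WithLp.toLp 2 x‖ ≤ √a := Real.le_sqrt_of_sq_le hx
  have hy' : ‖WithLp.toLp 2 y‖ ≤ √b := Real.le_sqrt_of_sq_le hy
  gcongr
  calc ‖WithLp.toLp 2 (x - y)‖ = ‖WithLp.toLp 2 x - WithLp.toLp 2 y‖ := rfl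
    _ ≤ ‖WithLp.toLp 2 x‖ + ‖WithLp.toLp 2 y‖ := norm_sub_le _ _
    _ ≤ √a + √b := add_le_add hx' hy'

theorem smul_dotProduct_smul_of_dotProduct_self_eq_one {R : Type*} [CommRing R] {v : n → R}
    (hv : v ⬝ᵥ v = 1) (c : R) : (c • v) ⬝ᵥ (c • v) = c ^ 2 := by
  rw [smul_dotProduct, dotProduct_smul, hv, smul_eq_mul, smul_eq_mul, mul_one, sq]

variable [DecidableEq n]

theorem Matrix.IsHermitian.mul_dotProduct_self_le_dotProduct_mulVec {A : Matrix n n ℝ}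
    (hA : A.IsHermitian) {l : ℝ} (hl : ∀ (μ : ℝ) (w : n → ℝ), w ≠ 0 → A *ᵥ w = μ • w → l ≤ μ)
    (u : n → ℝ) : l * (u ⬝ᵥ u) ≤ u ⬝ᵥ (A *ᵥ u) := by
  have hle : algebraMap ℝ (Matrix n n ℝ) l ≤ A := by
    refine (algebraMap_le_iff_le_spectrum hA.isSelfAdjoint).2 fun μ hμ => ?_
    rw [← spectrum_toLin', ← Module.End.hasEigenvalue_iff_mem_spectrum] at hμ
    obtain ⟨w, hw⟩ := hμ.exists_hasEigenvector
    exact hl μ w hw.2 (by simpa using hw.apply_eq_smul)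
  have := (Matrix.le_iff.1 hle).dotProduct_mulVec_nonneg u
  rw [Algebra.algebraMap_eq_smul_one, sub_mulVec, smul_mulVec, one_mulVec, dotProduct_sub,
    dotProduct_smul, smul_eq_mul] at this
  exact sub_nonneg.1 this

theorem Matrix.inv_mulVec_eq_inv_smul {K : Type*} [Field K] {A : Matrix n n K} (hA : IsUnit A.det)
    {μ : K} (hμ : μ ≠ 0) {v : n → K} (hv : A *ᵥ v = μ • v) : A⁻¹ *ᵥ v = μ⁻¹ • v := by
  have hback : A⁻¹ *ᵥ (μ • v) = v := by rw [← hv, mulVec_mulVec, nonsing_inv_mul A hA, one_mulVec]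
  calc A⁻¹ *ᵥ v = μ⁻¹ • A⁻¹ *ᵥ (μ • v) := by
        rw [mulVec_smul, smul_smul, inv_mul_cancel₀ hμ, one_smul]
    _ = μ⁻¹ • v := by rw [hback]

theorem Matrix.dotProduct_inv_mulVec_le {A : Matrix n n ℝ} (hA : IsUnit A.det) {l : ℝ} (hl : 0 < l)
    (hlA : ∀ u, l * (u ⬝ᵥ u) ≤ u ⬝ᵥ (A *ᵥ u)) (w : n → ℝ) :
    w ⬝ᵥ (A⁻¹ *ᵥ w) ≤ (w ⬝ᵥ w) / l := by
  -- With `u = A⁻¹ w`: `0 ≤ ‖w - l • u‖²` and `l ‖u‖² ≤ ⟪w, u⟫` combine to `l ⟪w, u⟫ ≤ ‖w‖²`.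
  set u := A⁻¹ *ᵥ w
  have hw : A *ᵥ u = w := by rw [mulVec_mulVec, mul_nonsing_inv A hA, one_mulVec]
  have hu : l * (u ⬝ᵥ u) ≤ w ⬝ᵥ u := by simpa only [hw, dotProduct_comm u w] using hlA u
  have hsq : 0 ≤ (w - l • u) ⬝ᵥ (w - l • u) := by
    simpa using dotProduct_star_self_nonneg (w - l • u)
  rw [sub_dotProduct, dotProduct_sub, dotProduct_sub, dotProduct_comm (l • u) w] at hsq
  simp only [smul_dotProduct, dotProduct_smul, smul_eq_mul] at hsq
  rw [le_div_iff₀ hl]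
  linarith [mul_le_mul_of_nonneg_left hu hl.le]

end

theorem stmt_16_general (n : ℕ) (Sig : Matrix (Fin n) (Fin n) ℝ)
    (hSig : Sig.PosDef)
    (P0 P1 : ℝ) (hP0 : 0 < P0) (hP1 : 0 < P1)
    (lammin : ℝ) (v : Fin n → ℝ)
    (hv : Sig *ᵥ v = lammin • v) (hvunit : v ⬝ᵥ v = 1)
    (hmin : ∀ (μ : ℝ) (w : Fin n → ℝ), w ≠ 0 → Sig *ᵥ w = μ • w → lammin ≤ μ) :
    IsGreatest
      {x : ℝ | ∃ S0 S1 : Fin n → ℝ, S0 ⬝ᵥ S0 ≤ P0 ∧ S1 ⬝ᵥ S1 ≤ P1 ∧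
        x = (S1 - S0) ⬝ᵥ (Sig⁻¹ *ᵥ (S1 - S0))}
      ((Real.sqrt P0 + Real.sqrt P1) ^ 2 / lammin) ∧
    ((-(Real.sqrt P0) • v) ⬝ᵥ (-(Real.sqrt P0) • v) ≤ P0 ∧
      (Real.sqrt P1 • v) ⬝ᵥ (Real.sqrt P1 • v) ≤ P1 ∧
      (Real.sqrt P1 • v - (-(Real.sqrt P0) • v)) ⬝ᵥ
          (Sig⁻¹ *ᵥ (Real.sqrt P1 • v - (-(Real.sqrt P0) • v)))
        = (Real.sqrt P0 + Real.sqrt P1) ^ 2 / lammin) := by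
  have hv0 : v ≠ 0 := by rintro rfl; simp at hvunit
  have hl : 0 < lammin := by
    simpa [hv, hvunit] using hSig.dotProduct_mulVec_pos hv0
  have hdet : IsUnit Sig.det := hSig.det_pos.ne'.isUnit
  have hS0 : (-√P0 • v) ⬝ᵥ (-√P0 • v) ≤ P0 := by
    rw [smul_dotProduct_smul_of_dotProduct_self_eq_one hvunit, neg_sq, Real.sq_sqrt hP0.le]
  have hS1 : (√P1 • v) ⬝ᵥ (√P1 • v) ≤ P1 := by
    rw [smul_dotProduct_smul_of_dotProduct_self_eq_one hvunit, Real.sq_sqrt hP1.le]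
  have hval : (√P1 • v - (-√P0 • v)) ⬝ᵥ (Sig⁻¹ *ᵥ (√P1 • v - (-√P0 • v)))
      = (√P0 + √P1) ^ 2 / lammin := by
    rw [neg_smul, sub_neg_eq_add, ← add_smul, add_comm √P1, mulVec_smul,
      inv_mulVec_eq_inv_smul hdet hl.ne' hv]
    simp only [smul_dotProduct, dotProduct_smul, hvunit, smul_eq_mul]
    ring
  refine ⟨⟨⟨-√P0 • v, √P1 • v, hS0, hS1, hval.symm⟩, ?_⟩, hS0, hS1, hval⟩
  rintro x ⟨S0, S1, h0, h1, rfl⟩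
  calc (S1 - S0) ⬝ᵥ (Sig⁻¹ *ᵥ (S1 - S0)) ≤ (S1 - S0) ⬝ᵥ (S1 - S0) / lammin :=
        dotProduct_inv_mulVec_le hdet hl
          (hSig.isHermitian.mul_dotProduct_self_le_dotProduct_mulVec hmin) _
    _ ≤ (√P0 + √P1) ^ 2 / lammin := by
        rw [add_comm]
        gcongr
        exact dotProduct_sub_self_le h1 h0

/-- Optimal vector signal separation: the greatest value of the Mahalanobis
separation `(S1 − S0)ᵀ Σ⁻¹ (S1 − S0)` over the peak-power constraints equals
`(√P0 + √P1)²/λ_min` and is attained along a unit eigenvector `v` of the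
smallest eigenvalue `λ_min` of `Σ`, at `S0 = −√P0·v`, `S1 = √P1·v`. -/
theorem stmt_16 (n : ℕ) (hn : 1 ≤ n) (Sig : Matrix (Fin n) (Fin n) ℝ)
    (hSig : Sig.PosDef) (hSigSymm : Sig.IsSymm)
    (P0 P1 : ℝ) (hP0 : 0 < P0) (hP1 : 0 < P1)
    (lammin : ℝ) (v : Fin n → ℝ)
    (hv : Sig *ᵥ v = lammin • v) (hvunit : v ⬝ᵥ v = 1)
    (hmin : ∀ (μ : ℝ) (w : Fin n → ℝ), w ≠ 0 → Sig *ᵥ w = μ • w → lammin ≤ μ) :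
    IsGreatest
      {x : ℝ | ∃ S0 S1 : Fin n → ℝ, S0 ⬝ᵥ S0 ≤ P0 ∧ S1 ⬝ᵥ S1 ≤ P1 ∧
        x = (S1 - S0) ⬝ᵥ (Sig⁻¹ *ᵥ (S1 - S0))}
      ((Real.sqrt P0 + Real.sqrt P1) ^ 2 / lammin) ∧
    ((-(Real.sqrt P0) • v) ⬝ᵥ (-(Real.sqrt P0) • v) ≤ P0 ∧
      (Real.sqrt P1 • v) ⬝ᵥ (Real.sqrt P1 • v) ≤ P1 ∧
      (Real.sqrt P1 • v - (-(Real.sqrt P0) • v)) ⬝ᵥ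
          (Sig⁻¹ *ᵥ (Real.sqrt P1 • v - (-(Real.sqrt P0) • v)))
        = (Real.sqrt P0 + Real.sqrt P1) ^ 2 / lammin) :=
  stmt_16_general n Sig hSig P0 P1 hP0 hP1 lammin v hv hvunit hmin
end
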